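/- arXiv:2208.08679 — 2 statements merged into one kernel-verified Lean document; each statement's English description precedes it below -/
import Mathlib

section
/- Let X ∈ ℝ^{n×p}, λ > 0, and let γ̂ ∈ ℝ^{p−1} be a node-wise Lasso solution whose support S := {j : γ̂_j ≠ 0} has ŝ := |S| ≥ 1 elements with 1 + ŝ ≤ p, and whose active columns {X_j : j ∈ S} are linearly independent. Then the residual variance τ̃² := (1/n)‖X₁ − X₋₁γ̂‖² satisfies τ̃² ≥ φ_min(1 + ŝ) + λ²·ŝ/φ_max(ŝ); equivalently, if τ̃² > 0 then 1/τ̃² ≤ min{ 1/φ_min(1 + ŝ), φ_max(ŝ)/(λ²ŝ) } (with 1/0 interpreted as +∞). -/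
open MeasureTheory ProbabilityTheory Filter Finset Matrix Topology

noncomputable section

/-- Squared Euclidean norm of a vector in `ℝ^m`. -/
def sqNorm {m : ℕ} (v : Fin m → ℝ) : ℝ := ∑ i, (v i) ^ 2

/-- ℓ¹ norm of a vector in `ℝ^m`. -/
def l1Norm {m : ℕ} (v : Fin m → ℝ) : ℝ := ∑ i, |v i|

/-- ℓ^∞ norm (maximum absolute entry) of a vector in `ℝ^m`. -/
def supNorm {m : ℕ} (v : Fin m → ℝ) : ℝ := ⨆ i, |v i|

/-- First entry of a vector (0 if the vector is empty). -/
def fstEntry {P : ℕ} (v : Fin P → ℝ) : ℝ := if h : 0 < P then v ⟨0, h⟩ else 0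

/-- Index of the (j+2)-nd column, as an element of `Fin P`, for `j : Fin (P-1)`. -/
def colIdx {P : ℕ} (j : Fin (P - 1)) : Fin P := ⟨j.1 + 1, by have := j.isLt; omega⟩

/-- First column of the design matrix `X` (rows indexed by `Fin n`, columns by `Fin P`). -/
def col0 {n P : ℕ} (X : Fin n → Fin P → ℝ) : Fin n → ℝ := fun i => fstEntry (X i)

/-- Residual `X₁ - X₋₁ γ` of the node-wise regression of the first column on the others. -/
def nwRes {n P : ℕ} (X : Fin n → Fin P → ℝ) (g : Fin (P - 1) → ℝ) : Fin n → ℝ :=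
  fun i => col0 X i - ∑ j : Fin (P - 1), X i (colIdx j) * g j

/-- Node-wise Lasso objective `(1/n)‖X₁ - X₋₁γ‖² + 2λ‖γ‖₁`. -/
def nwObj {n P : ℕ} (X : Fin n → Fin P → ℝ) (lam : ℝ) (g : Fin (P - 1) → ℝ) : ℝ :=
  (1 / n) * sqNorm (nwRes X g) + 2 * lam * l1Norm g

/-- `g` is a node-wise Lasso solution with tuning parameter `lam`. -/
def IsNodewiseSol {n P : ℕ} (X : Fin n → Fin P → ℝ) (lam : ℝ) (g : Fin (P - 1) → ℝ) : Prop :=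
  ∀ γ : Fin (P - 1) → ℝ, nwObj X lam g ≤ nwObj X lam γ

/-- `τ̃² := (1/n)‖X₁ - X₋₁γ̂‖²`. -/
def tauTildeSq {n P : ℕ} (X : Fin n → Fin P → ℝ) (g : Fin (P - 1) → ℝ) : ℝ :=
  (1 / n) * sqNorm (nwRes X g)

/-- `τ̂² := τ̃² + λ‖γ̂‖₁`. -/
def tauHatSq {n P : ℕ} (X : Fin n → Fin P → ℝ) (lam : ℝ) (g : Fin (P - 1) → ℝ) : ℝ :=
  tauTildeSq X g + lam * l1Norm g

/-- `Θ̂₁ := (1/τ̂²)(1, -γ̂ᵀ)ᵀ ∈ ℝ^P`. -/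
def thetaHat {n P : ℕ} (X : Fin n → Fin P → ℝ) (lam : ℝ) (g : Fin (P - 1) → ℝ) :
    Fin P → ℝ :=
  fun j =>
    if h : j.1 = 0 then 1 / tauHatSq X lam g
    else -(g ⟨j.1 - 1, by have := j.isLt; omega⟩) / tauHatSq X lam g

/-- Sample covariance matrix `Σ̂ := XᵀX/n`. -/
def sigmaHat {n P : ℕ} (X : Fin n → Fin P → ℝ) : Fin P → Fin P → ℝ :=
  fun j k => (1 / n) * ∑ i, X i j * X i k

/-- The vector `Σ̂Θ̂₁ - e₁`. -/
def biasVec {n P : ℕ} (X : Fin n → Fin P → ℝ) (lam : ℝ) (g : Fin (P - 1) → ℝ) :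
    Fin P → ℝ :=
  fun j => (∑ k, sigmaHat X j k * thetaHat X lam g k) - (if j.1 = 0 then 1 else 0)

/-- `Ω̂₁,₁ := Θ̂₁ᵀ Σ̂ Θ̂₁`. -/
def omegaHat {n P : ℕ} (X : Fin n → Fin P → ℝ) (lam : ℝ) (g : Fin (P - 1) → ℝ) : ℝ :=
  ∑ j, ∑ k, thetaHat X lam g j * sigmaHat X j k * thetaHat X lam g k

/-- Bias factor `f(λ) := ‖Σ̂Θ̂₁ - e₁‖_∞ / Ω̂₁,₁^{1/2}`. -/
def biasFactor {n P : ℕ} (X : Fin n → Fin P → ℝ) (lam : ℝ) (g : Fin (P - 1) → ℝ) : ℝ :=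
  supNorm (biasVec X lam g) / Real.sqrt (omegaHat X lam g)

/-- Restricted maximum eigenvalue `φ_max(s)` of the sample covariance of `X`. -/
def phiMax {n P : ℕ} (X : Fin n → Fin P → ℝ) (s : ℕ) : ℝ :=
  sSup {r : ℝ | ∃ z : Fin P → ℝ, z ≠ 0 ∧ {j : Fin P | z j ≠ 0}.ncard ≤ s ∧
    r = sqNorm (fun i => ∑ j, X i j * z j) / (n * sqNorm z)}

/-- Restricted minimum eigenvalue `φ_min(s)` of the sample covariance of `X`. -/
def phiMin {n P : ℕ} (X : Fin n → Fin P → ℝ) (s : ℕ) : ℝ :=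
  sInf {r : ℝ | ∃ z : Fin P → ℝ, z ≠ 0 ∧ {j : Fin P | z j ≠ 0}.ncard ≤ s ∧
    r = sqNorm (fun i => ∑ j, X i j * z j) / (n * sqNorm z)}

/-- Restricted eigenvalue `κ(s,c₀)²` of Bickel–Ritov–Tsybakov. -/
def kappaSq {n P : ℕ} (X : Fin n → Fin P → ℝ) (s : ℕ) (c0 : ℝ) : ℝ :=
  sInf {r : ℝ | ∃ S : Finset (Fin P), S.card ≤ s ∧ ∃ z : Fin P → ℝ, z ≠ 0 ∧
    (∑ j ∈ Sᶜ, |z j|) ≤ c0 * ∑ j ∈ S, |z j| ∧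
    r = sqNorm (fun i => ∑ j, X i j * z j) / (n * ∑ j ∈ S, (z j) ^ 2)}

/-- The columns of `X` are in general position. -/
def InGeneralPosition {n P : ℕ} (X : Fin n → Fin P → ℝ) : Prop :=
  ∀ k : ℕ, k < min n P → ∀ ι : Fin (k + 1) → Fin P, Function.Injective ι →
    ∀ σ : Fin (k + 1) → ℝ, (∀ l, σ l = 1 ∨ σ l = -1) →
      ∀ i : Fin P, i ∉ Set.range ι → ∀ s : ℝ, s = 1 ∨ s = -1 →
        (s • fun r => X r i) ∉
          affineSpan ℝ (Set.range fun l => σ l • fun r => X r (ι l))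

/-- `b` is a Lasso solution for response `Y`, design `X`, tuning parameter `lam`. -/
def IsLassoSol {n P : ℕ} (X : Fin n → Fin P → ℝ) (Y : Fin n → ℝ) (lam : ℝ)
    (b : Fin P → ℝ) : Prop :=
  ∀ β : Fin P → ℝ,
    (1 / n) * sqNorm (fun i => Y i - ∑ j, X i j * b j) + 2 * lam * l1Norm b ≤
      (1 / n) * sqNorm (fun i => Y i - ∑ j, X i j * β j) + 2 * lam * l1Norm β

/-- The debiased Lasso `b̂₁ := β̂₁ + (1/n)Θ̂₁ᵀXᵀ(Y - Xβ̂)`. -/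
def debiasedLasso {n P : ℕ} (X : Fin n → Fin P → ℝ) (Y : Fin n → ℝ)
    (Theta : Fin P → ℝ) (bh : Fin P → ℝ) : ℝ :=
  fstEntry bh + (1 / n) * ∑ j, Theta j * ∑ i, X i j * (Y i - ∑ k, X i k * bh k)

/-- `W₁ := (1/√n)Θ̂₁ᵀXᵀε`. -/
def W1 {n P : ℕ} (X : Fin n → Fin P → ℝ) (Theta : Fin P → ℝ) (e : Fin n → ℝ) : ℝ :=
  (1 / Real.sqrt n) * ∑ j, Theta j * ∑ i, X i j * e i

/-- `Δ₁ := √n (Σ̂Θ̂₁ - e₁)ᵀ(β₀ - β̂)`. -/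
def Delta1 {n P : ℕ} (X : Fin n → Fin P → ℝ) (Theta : Fin P → ℝ)
    (b0 bh : Fin P → ℝ) : ℝ :=
  Real.sqrt n * ∑ j, ((∑ k, sigmaHat X j k * Theta k) - (if j.1 = 0 then 1 else 0)) *
    (b0 j - bh j)

/-- Standard normal cumulative distribution function. -/
def gaussCdf (z : ℝ) : ℝ := ((gaussianReal 0 1) (Set.Iic z)).toReal


lemma sqNorm_nonneg' {m : ℕ} (v : Fin m → ℝ) : 0 ≤ sqNorm v :=
  Finset.sum_nonneg fun i _ => sq_nonneg _

lemma sqNorm_pos' {m : ℕ} {v : Fin m → ℝ} (hv : v ≠ 0) : 0 < sqNorm v := by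
  obtain ⟨j, hj⟩ := Function.ne_iff.mp hv
  have h1 : (0:ℝ) < v j ^ 2 := (sq_nonneg _).lt_of_ne' (pow_ne_zero 2 hj)
  have h2 := Finset.single_le_sum (f := fun i => (v i)^2) (fun i _ => sq_nonneg _) (Finset.mem_univ j)
  simpa [sqNorm] using lt_of_lt_of_le h1 h2

lemma sum_split {P : ℕ} (hP : 0 < P) (F : Fin P → ℝ) :
    ∑ j, F j = F ⟨0, hP⟩ + ∑ j : Fin (P-1), F (colIdx j) := by
  obtain ⟨Q, rfl⟩ : ∃ Q, P = Q + 1 := ⟨P - 1, by omega⟩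
  rw [Fin.sum_univ_succ]
  rfl

def pad {P : ℕ} (c : ℝ) (v : Fin (P-1) → ℝ) : Fin P → ℝ :=
  fun j => if h : j.1 = 0 then c else v ⟨j.1 - 1, by have := j.isLt; omega⟩

lemma pad_zero {P : ℕ} (hP : 0 < P) (c : ℝ) (v : Fin (P-1) → ℝ) : pad c v ⟨0, hP⟩ = c := rfl

lemma pad_col {P : ℕ} (c : ℝ) (v : Fin (P-1) → ℝ) (j : Fin (P-1)) : pad c v (colIdx j) = v j := by
  simp only [pad, colIdx]
  rfl

lemma sqNorm_sub_smul {m : ℕ} (r w : Fin m → ℝ) (t : ℝ) :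
    sqNorm (fun i => r i - t * w i)
      = sqNorm r - 2*t*(∑ i, r i * w i) + t^2 * sqNorm w := by
  have h : ∀ i : Fin m, (r i - t*w i)^2 = r i^2 - 2*t*(r i * w i) + t^2 * w i^2 := fun i => by ring
  simp only [sqNorm, h, Finset.sum_add_distrib, Finset.sum_sub_distrib, ← Finset.mul_sum]
lemma support_pad_subset {P : ℕ} (hP : 0 < P) (c : ℝ) (v : Fin (P-1) → ℝ)
    (S : Finset (Fin (P-1))) (hv : ∀ j, v j ≠ 0 → j ∈ S) :
    {j : Fin P | pad c v j ≠ 0} ⊆ {(⟨0, hP⟩ : Fin P)} ∪ (colIdx '' (S : Set (Fin (P-1)))) := by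
  intro j hj
  by_cases h0 : j.1 = 0
  · left; exact Fin.ext h0
  · right
    have hlt : j.1 - 1 < P - 1 := by have := j.isLt; omega
    refine ⟨⟨j.1 - 1, hlt⟩, ?_, ?_⟩
    · apply hv
      simp only [Set.mem_setOf_eq, pad, dif_neg h0] at hj
      exact hj
    · exact Fin.ext (by simp [colIdx]; omega)

lemma ncard_support_pad {P : ℕ} (hP : 0 < P) (c : ℝ) (v : Fin (P-1) → ℝ)
    (S : Finset (Fin (P-1))) (hv : ∀ j, v j ≠ 0 → j ∈ S) :
    {j : Fin P | pad c v j ≠ 0}.ncard ≤ 1 + S.card := by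
  have h1 := Set.ncard_le_ncard (support_pad_subset hP c v S hv) (Set.toFinite _)
  refine h1.trans ?_
  refine (Set.ncard_union_le _ _).trans ?_
  gcongr
  · exact le_of_eq (Set.ncard_singleton _)
  · exact (Set.ncard_image_le (Set.toFinite _)).trans (le_of_eq (Set.ncard_coe_finset S))

lemma ncard_support_pad0 {P : ℕ} (hP : 0 < P) (v : Fin (P-1) → ℝ)
    (S : Finset (Fin (P-1))) (hv : ∀ j, v j ≠ 0 → j ∈ S) :
    {j : Fin P | pad 0 v j ≠ 0}.ncard ≤ S.card := by
  have hsub : {j : Fin P | pad 0 v j ≠ 0} ⊆ colIdx '' (S : Set (Fin (P-1))) := by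
    intro j hj
    rcases support_pad_subset hP 0 v S hv hj with h | h
    · exfalso
      rw [Set.mem_singleton_iff] at h
      subst h
      exact hj rfl
    · exact h
  have h1 := Set.ncard_le_ncard hsub (Set.toFinite _)
  exact h1.trans ((Set.ncard_image_le (Set.toFinite _)).trans (le_of_eq (Set.ncard_coe_finset S)))

lemma sqNorm_pad {P : ℕ} (hP : 0 < P) (c : ℝ) (v : Fin (P-1) → ℝ) :
    sqNorm (pad c v) = c^2 + sqNorm v := by
  rw [sqNorm, sum_split hP (fun j => (pad c v j)^2)]
  simp [pad_zero hP, pad_col, sqNorm]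

lemma mulvec_pad {n P : ℕ} (hP : 0 < P) (X : Fin n → Fin P → ℝ) (c : ℝ)
    (v : Fin (P-1) → ℝ) (i : Fin n) :
    ∑ j, X i j * pad c v j = X i ⟨0, hP⟩ * c + ∑ k, X i (colIdx k) * v k := by
  rw [sum_split hP (fun j => X i j * pad c v j)]
  simp [pad_zero hP, pad_col]
lemma phiSet_nonneg {n P : ℕ} (X : Fin n → Fin P → ℝ) (s : ℕ) :
    ∀ r ∈ {r : ℝ | ∃ z : Fin P → ℝ, z ≠ 0 ∧ {j : Fin P | z j ≠ 0}.ncard ≤ s ∧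
      r = sqNorm (fun i => ∑ j, X i j * z j) / (n * sqNorm z)}, 0 ≤ r := by
  rintro r ⟨z, hz, hc, rfl⟩
  have h1 := sqNorm_nonneg' (fun i => ∑ j, X i j * z j)
  have h2 := sqNorm_nonneg' z
  positivity

lemma phiMin_nonneg' {n P : ℕ} (X : Fin n → Fin P → ℝ) (s : ℕ) : 0 ≤ phiMin X s :=
  Real.sInf_nonneg (phiSet_nonneg X s)

lemma phiMin_le' {n P : ℕ} (X : Fin n → Fin P → ℝ) (s : ℕ) {z : Fin P → ℝ}
    (hz : z ≠ 0) (hc : {j : Fin P | z j ≠ 0}.ncard ≤ s) :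
    phiMin X s ≤ sqNorm (fun i => ∑ j, X i j * z j) / (n * sqNorm z) :=
  csInf_le ⟨0, phiSet_nonneg X s⟩ ⟨z, hz, hc, rfl⟩

lemma phiSet_bddAbove {n P : ℕ} (hn : 1 ≤ n) (X : Fin n → Fin P → ℝ) (s : ℕ) :
    BddAbove {r : ℝ | ∃ z : Fin P → ℝ, z ≠ 0 ∧ {j : Fin P | z j ≠ 0}.ncard ≤ s ∧
      r = sqNorm (fun i => ∑ j, X i j * z j) / (n * sqNorm z)} := by
  refine ⟨∑ i, ∑ j, (X i j)^2, ?_⟩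
  rintro r ⟨z, hz, hc, rfl⟩
  set M : ℝ := ∑ i, ∑ j, (X i j)^2 with hM
  have hMnn : 0 ≤ M := Finset.sum_nonneg fun i _ => Finset.sum_nonneg fun j _ => sq_nonneg _
  have hB : 0 < sqNorm z := sqNorm_pos' hz
  have hn' : (1:ℝ) ≤ n := by exact_mod_cast hn
  have hCS : sqNorm (fun i => ∑ j, X i j * z j) ≤ M * sqNorm z := by
    rw [sqNorm, hM, Finset.sum_mul]
    refine Finset.sum_le_sum fun i _ => ?_
    exact Finset.sum_mul_sq_le_sq_mul_sq Finset.univ (X i) z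
  have h1 : sqNorm (fun i => ∑ j, X i j * z j) / (n * sqNorm z) ≤ (M * sqNorm z) / (n * sqNorm z) := by
    apply div_le_div_of_nonneg_right hCS ?_ |>.trans_eq rfl
    positivity
  refine h1.trans ?_
  rw [mul_comm (n:ℝ) (sqNorm z), mul_comm M (sqNorm z), mul_div_mul_left _ _ (ne_of_gt hB)]
  exact div_le_self hMnn hn'

lemma le_phiMax' {n P : ℕ} (hn : 1 ≤ n) (X : Fin n → Fin P → ℝ) (s : ℕ) {z : Fin P → ℝ}
    (hz : z ≠ 0) (hc : {j : Fin P | z j ≠ 0}.ncard ≤ s) :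
    sqNorm (fun i => ∑ j, X i j * z j) / (n * sqNorm z) ≤ phiMax X s :=
  le_csSup (phiSet_bddAbove hn X s) ⟨z, hz, hc, rfl⟩
lemma kkt {n P : ℕ} (hn : 1 ≤ n) (X : Fin n → Fin P → ℝ) {lam : ℝ}
    {g : Fin (P-1) → ℝ} (hsol : IsNodewiseSol X lam g) {j : Fin (P-1)} (hgj : g j ≠ 0) :
    ∑ i, X i (colIdx j) * nwRes X g i = n * lam * (g j / |g j|) := by
  have hn0 : (0:ℝ) < n := by exact_mod_cast hn
  set r := nwRes X g with hr
  set c : Fin n → ℝ := fun i => X i (colIdx j) with hc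
  set A : ℝ := ∑ i, r i * c i with hA
  set B : ℝ := ∑ i, (c i)^2 with hB
  have hBnn : 0 ≤ B := Finset.sum_nonneg fun i _ => sq_nonneg _
  -- residual after perturbation
  have hres : ∀ t : ℝ, ∀ i, nwRes X (Function.update g j (g j + t)) i = r i - t * c i := by
    intro t i
    have hupd : ∀ k, Function.update g j (g j + t) k = g k + (if k = j then t else 0) := by
      intro k
      rcases eq_or_ne k j with rfl | hk
      · simp
      · simp [Function.update_of_ne hk, hk]
    simp only [nwRes, hupd, mul_add, Finset.sum_add_distrib, mul_ite, mul_zero,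
      Finset.sum_ite_eq' Finset.univ j, Finset.mem_univ, if_true]
    simp only [hr, nwRes, hc]
    ring
  -- ℓ¹ norm after perturbation
  have hl1 : ∀ t : ℝ, l1Norm (Function.update g j (g j + t)) = l1Norm g + (|g j + t| - |g j|) := by
    intro t
    have h1 : ∑ k, (|Function.update g j (g j + t) k| - |g k|) = |g j + t| - |g j| := by
      rw [Finset.sum_eq_single j]
      · simp
      · intro k _ hk; simp [Function.update_of_ne hk]
      · simp
    rw [Finset.sum_sub_distrib] at h1
    simp only [l1Norm]
    linarith
  -- objective inequality
  have hobj : ∀ t : ℝ, 0 ≤ (1/(n:ℝ)) * (t^2*B - 2*t*A) + 2*lam*(|g j + t| - |g j|) := by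
    intro t
    have h := hsol (Function.update g j (g j + t))
    rw [nwObj, nwObj] at h
    have hsq : sqNorm (nwRes X (Function.update g j (g j + t)))
        = sqNorm r - 2*t*A + t^2*B := by
      calc sqNorm (nwRes X (Function.update g j (g j + t)))
          = sqNorm (fun i => r i - t * c i) := by
            congr 1; funext i; exact hres t i
        _ = sqNorm r - 2*t*A + t^2*B := by
            rw [sqNorm_sub_smul r c t, hA, hB]; rfl
    rw [hsq, hl1 t] at h
    nlinarith [h]
  -- absolute value linearization
  have habs : ∀ t : ℝ, |t| ≤ |g j| → |g j + t| - |g j| = t * (g j / |g j|) := by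
    intro t ht
    rcases hgj.lt_or_gt with h | h
    · have h1 : |g j| = -g j := abs_of_neg h
      have h2 : g j + t ≤ 0 := by
        have h3 := (abs_le.mp ht).2
        rw [h1] at h3; linarith
      rw [abs_of_nonpos h2, h1, div_neg, div_self hgj]
      ring
    · have h1 : |g j| = g j := abs_of_pos h
      have h2 : 0 ≤ g j + t := by
        have h3 := (abs_le.mp ht).1
        rw [h1] at h3; linarith
      rw [abs_of_nonneg h2, h1, div_self hgj]
      ring
  set a : ℝ := 2*lam*(g j/|g j|) - 2*A/n with ha
  set b : ℝ := B/n with hb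
  have hbnn : 0 ≤ b := div_nonneg hBnn hn0.le
  have hδ : 0 < |g j| := abs_pos.mpr hgj
  have hab : ∀ t : ℝ, |t| ≤ |g j| → 0 ≤ a*t + b*t^2 := by
    intro t ht
    have h1 := hobj t
    rw [habs t ht] at h1
    have h2 : (1/(n:ℝ))*(t^2*B - 2*t*A) + 2*lam*(t*(g j/|g j|)) = a*t + b*t^2 := by
      rw [ha, hb]; field_simp; ring
    linarith [h2 ▸ h1]
  have hColl : ∀ t : ℝ, 0 < t → t ≤ |g j| → |a| ≤ b*t := by
    intro t ht1 ht2
    have habst : |t| ≤ |g j| := by rw [abs_of_pos ht1]; exact ht2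
    have habst' : |(-t)| ≤ |g j| := by rw [abs_neg, abs_of_pos ht1]; exact ht2
    have h1 := hab t habst
    have h2 := hab (-t) habst'
    rw [abs_le]
    constructor
    · -- -(b*t) ≤ a, from 0 ≤ a*t + b*t^2
      nlinarith [h1, ht1]
    · nlinarith [h2, ht1]
  have ha0 : a = 0 := by
    by_contra hne
    have hapos : 0 < |a| := abs_pos.mpr hne
    rcases eq_or_lt_of_le hbnn with hb0 | hb0
    · have h1 := hColl |g j| hδ le_rfl
      rw [← hb0] at h1
      simp at h1
      exact hne h1
    · set t0 := min |g j| (|a|/(2*b)) with ht0def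
      have ht0 : 0 < t0 := lt_min hδ (div_pos hapos (by linarith))
      have h1 := hColl t0 ht0 (min_le_left _ _)
      have h2 : b * t0 ≤ b * (|a|/(2*b)) := mul_le_mul_of_nonneg_left (min_le_right _ _) hbnn
      have h3 : b * (|a|/(2*b)) = |a|/2 := by field_simp
      linarith
  have hfin : A = n * lam * (g j/|g j|) := by
    rw [ha] at ha0
    have hn' : (n:ℝ) ≠ 0 := ne_of_gt hn0
    have hne' : |g j| ≠ 0 := ne_of_gt hδ
    field_simp at ha0 ⊢
    linarith
  rw [← hfin, hA]
  exact Finset.sum_congr rfl fun i _ => mul_comm _ _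


/-- lower bound for the node-wise Lasso residual variance,
`τ̃² ≥ φ_min(1+ŝ) + λ²ŝ/φ_max(ŝ)`, and the equivalent upper bound for `1/τ̃²`
(the factor `1/φ_min(1+ŝ)` being interpreted as `+∞` when `φ_min(1+ŝ) = 0`). -/
theorem statement13 (n p : ℕ) (hn : 1 ≤ n) (hp : 2 ≤ p)
    (X : Fin n → Fin p → ℝ) (lam : ℝ) (hlam : 0 < lam)
    (g : Fin (p - 1) → ℝ) (hsol : IsNodewiseSol X lam g)
    (S : Finset (Fin (p - 1))) (hS : ∀ j, j ∈ S ↔ g j ≠ 0)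
    (hcard : 1 ≤ S.card) (hcardp : 1 + S.card ≤ p)
    (hind : LinearIndependent ℝ (fun j : {j // j ∈ S} => fun i => X i (colIdx j.1))) :
    phiMin X (1 + S.card) + lam ^ 2 * S.card / phiMax X S.card ≤ tauTildeSq X g ∧
      (0 < tauTildeSq X g →
        (0 < phiMin X (1 + S.card) →
          1 / tauTildeSq X g ≤ 1 / phiMin X (1 + S.card)) ∧
        1 / tauTildeSq X g ≤ phiMax X S.card / (lam ^ 2 * S.card)) := by
  have hp1 : 0 < p := by omega
  have hn0 : (0:ℝ) < n := by exact_mod_cast hn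
  set r := nwRes X g with hrdef
  set sh : ℝ := (S.card : ℝ) with hshdef
  have hsh1 : (1:ℝ) ≤ sh := by rw [hshdef]; exact_mod_cast hcard
  have hK0 : 0 < lam^2 * sh := by positivity
  have hgS : ∀ j ∈ S, g j ≠ 0 := fun j hj => (hS j).mp hj
  have hgSc : ∀ j, j ∉ S → g j = 0 := fun j hj => by
    by_contra h; exact hj ((hS j).mpr h)
  have hKKT : ∀ j ∈ S, ∑ i, X i (colIdx j) * r i = n * lam * (g j / |g j|) :=
    fun j hj => kkt hn X hsol (hgS j hj)
  set u : Fin (p-1) → ℝ := fun k => if k ∈ S then lam * (g k / |g k|) else 0 with hu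
  have hsg2 : ∀ k ∈ S, (g k / |g k|)^2 = 1 := by
    intro k hk
    rw [div_pow, sq_abs, div_self (pow_ne_zero 2 (hgS k hk))]
  set w : Fin n → ℝ := fun i => ∑ k, X i (colIdx k) * u k with hw
  -- F1 : inner product of residual with signed design combination
  have hrw : ∑ i, r i * w i = (n:ℝ) * (lam^2 * sh) := by
    have h1 : ∑ i, r i * w i = ∑ k, u k * ∑ i, X i (colIdx k) * r i := by
      simp only [hw, Finset.mul_sum]
      rw [Finset.sum_comm]
      exact Finset.sum_congr rfl fun k _ => Finset.sum_congr rfl fun i _ => by ring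
    rw [h1, ← Finset.sum_subset (Finset.subset_univ S)
      (fun k _ hk => by simp [hu, hk])]
    have h2 : ∀ k ∈ S, u k * ∑ i, X i (colIdx k) * r i = (n:ℝ) * lam^2 := by
      intro k hk
      rw [hKKT k hk]
      simp only [hu, if_pos hk]
      have h3 : lam * (g k / |g k|) * ((n:ℝ) * lam * (g k / |g k|))
          = (n:ℝ) * lam^2 * ((g k/|g k|)^2) := by ring
      rw [h3, hsg2 k hk, mul_one]
    rw [Finset.sum_congr rfl h2, Finset.sum_const, nsmul_eq_mul, ← hshdef]
    ring
  obtain ⟨j0, hj0⟩ := Finset.card_pos.mp (by omega : 0 < S.card)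
  have hu0 : u j0 ≠ 0 := by
    simp only [hu, if_pos hj0]
    exact mul_ne_zero (ne_of_gt hlam)
      (div_ne_zero (hgS j0 hj0) (abs_ne_zero.mpr (hgS j0 hj0)))
  -- F2 : upper bound on sqNorm w via phiMax
  have hzuX : ∀ i, ∑ j, X i j * pad 0 u j = w i := by
    intro i
    rw [mulvec_pad hp1 X 0 u i]
    simp [hw]
  have hzune : pad (P:=p) 0 u ≠ 0 := by
    intro h
    have h2 := congrFun h (colIdx j0)
    rw [pad_col] at h2
    exact hu0 h2
  have hsqzu : sqNorm (pad (P:=p) 0 u) = lam^2 * sh := by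
    rw [sqNorm_pad hp1]
    have h3 : ∀ k ∈ S, (u k)^2 = lam^2 := by
      intro k hk
      simp only [hu, if_pos hk]
      rw [mul_pow, hsg2 k hk, mul_one]
    rw [sqNorm, ← Finset.sum_subset (Finset.subset_univ S)
      (fun k _ hk => by simp [hu, hk]),
      Finset.sum_congr rfl h3, Finset.sum_const, nsmul_eq_mul, ← hshdef]
    ring
  have hF2 : sqNorm w ≤ phiMax X S.card * ((n:ℝ) * (lam^2 * sh)) := by
    have h := le_phiMax' hn X S.card hzune
      (ncard_support_pad0 hp1 u S (fun k hk => by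
        by_contra h'
        exact hk (by simp [hu, h'])))
    rw [hsqzu] at h
    rw [show (fun i => ∑ j, X i j * pad 0 u j) = w from funext hzuX] at h
    exact (div_le_iff₀ (by positivity)).mp h
  -- F4 : sqNorm w > 0
  have hsqw_pos : 0 < sqNorm w := by
    rcases eq_or_lt_of_le (sqNorm_nonneg' w) with h | h
    · exfalso
      have hcs := Finset.sum_mul_sq_le_sq_mul_sq Finset.univ r w
      have h0 : ∑ i, w i ^ 2 = 0 := h.symm
      rw [hrw, h0, mul_zero] at hcs
      nlinarith [mul_pos hn0 hK0]
    · exact h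
  -- F5 : phiMax > 0
  have hphimax_pos : 0 < phiMax X S.card := by
    by_contra h
    push_neg at h
    nlinarith [hF2, hsqw_pos, mul_pos hn0 hK0]
  -- F3 : lower bound for perturbed residual
  have hF3 : ∀ t : ℝ, (n:ℝ) * phiMin X (1 + S.card) ≤ sqNorm (fun i => r i - t * w i) := by
    intro t
    set v : Fin (p-1) → ℝ := fun k => -(g k + t * u k) with hv
    have hzt : ∀ i, ∑ j, X i j * pad 1 v j = r i - t * w i := by
      intro i
      rw [mulvec_pad hp1 X 1 v i]
      have h1 : ∀ k ∈ Finset.univ, X i (colIdx k) * v k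
          = -(X i (colIdx k) * g k + t * (X i (colIdx k) * u k)) := by
        intro k _
        simp only [hv]; ring
      rw [Finset.sum_congr rfl h1, Finset.sum_neg_distrib, Finset.sum_add_distrib,
        ← Finset.mul_sum]
      have hc0 : col0 X i = X i ⟨0, hp1⟩ := by
        simp only [col0, fstEntry, dif_pos hp1]
      simp only [hrdef, nwRes, hc0, hw]
      ring
    have hne : pad (P:=p) 1 v ≠ 0 := fun h => by
      have h2 := congrFun h ⟨0, hp1⟩
      rw [pad_zero hp1] at h2
      simpa using h2
    have hsupp : {j : Fin p | pad 1 v j ≠ 0}.ncard ≤ 1 + S.card := by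
      apply ncard_support_pad hp1
      intro k hk
      by_contra hkS
      apply hk
      simp [hv, hgSc k hkS, hu, hkS]
    have hsq1 : 1 ≤ sqNorm (pad (P:=p) 1 v) := by
      rw [sqNorm_pad hp1, one_pow]
      linarith [sqNorm_nonneg' v]
    have hmin := phiMin_le' X (1 + S.card) hne hsupp
    rw [show (fun i => ∑ j, X i j * pad 1 v j) = fun i => r i - t * w i
      from funext hzt] at hmin
    have hpos : 0 < (n:ℝ) * sqNorm (pad (P:=p) 1 v) :=
      mul_pos hn0 (lt_of_lt_of_le one_pos hsq1)
    have h2 := (le_div_iff₀ hpos).mp hmin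
    have hmn := phiMin_nonneg' X (1+S.card)
    nlinarith [mul_nonneg (mul_nonneg hn0.le hmn) (sub_nonneg.mpr hsq1)]
  -- combine
  set K : ℝ := (n:ℝ) * (lam^2 * sh) with hKdef
  have hKpos : 0 < K := mul_pos hn0 hK0
  have h6 := hF3 (K / sqNorm w)
  rw [sqNorm_sub_smul r w (K/sqNorm w), hrw] at h6
  have hWne : sqNorm w ≠ 0 := ne_of_gt hsqw_pos
  have hsimp : sqNorm r - 2*(K/sqNorm w)*K + (K/sqNorm w)^2 * sqNorm w
      = sqNorm r - K^2/sqNorm w := by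
    field_simp
    ring
  rw [hsimp] at h6
  have h7 : K^2/(phiMax X S.card * K) ≤ K^2/sqNorm w := by
    exact div_le_div_of_nonneg_left (sq_nonneg K) hsqw_pos hF2
  have h8 : K^2/(phiMax X S.card * K) = K / phiMax X S.card := by
    rw [pow_two, mul_comm (phiMax X S.card) K, mul_div_mul_left _ _ (ne_of_gt hKpos)]
  have h9 : (n:ℝ) * phiMin X (1+S.card) + (n:ℝ) * (lam^2*sh/phiMax X S.card) ≤ sqNorm r := by
    have hKphi : K / phiMax X S.card = (n:ℝ) * (lam^2*sh/phiMax X S.card) := by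
      rw [hKdef, mul_div_assoc]
    rw [← hKphi]
    rw [h8] at h7
    linarith
  have htau : tauTildeSq X g = (1/(n:ℝ)) * sqNorm r := rfl
  have h10 : phiMin X (1+S.card) + lam^2*sh/phiMax X S.card ≤ tauTildeSq X g := by
    rw [htau]
    have h11 := mul_le_mul_of_nonneg_left h9 (le_of_lt (by positivity : (0:ℝ) < 1/(n:ℝ)))
    have h12 : (1/(n:ℝ)) * ((n:ℝ) * phiMin X (1+S.card) + (n:ℝ) * (lam^2*sh/phiMax X S.card))
        = phiMin X (1+S.card) + lam^2*sh/phiMax X S.card := by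
      rw [mul_add, ← mul_assoc, ← mul_assoc, one_div_mul_cancel (ne_of_gt hn0), one_mul, one_mul]
    linarith [h12 ▸ h11]
  refine ⟨h10, fun htpos => ?_⟩
  have hc2 : 0 < lam^2*sh/phiMax X S.card := div_pos hK0 hphimax_pos
  have hmn := phiMin_nonneg' X (1+S.card)
  constructor
  · intro hphimin_pos
    exact one_div_le_one_div_of_le hphimin_pos (by linarith)
  · have ht1 : lam^2*sh/phiMax X S.card ≤ tauTildeSq X g := by linarith
    have h11 := one_div_le_one_div_of_le hc2 ht1
    rw [one_div_div] at h11
    exact h11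

end
end

section
/- Let X ∈ ℝ^{n×p}, λ > 0, and let γ̂ ∈ ℝ^{p−1} be a node-wise Lasso solution with τ̃² := (1/n)‖X₁ − X₋₁γ̂‖² > 0; set τ̂² := τ̃² + λ‖γ̂‖₁, Θ̂₁ := (1/τ̂²)(1, −γ̂ᵀ)ᵀ, Σ̂ := XᵀX/n, and Ω̂₁,₁ := Θ̂₁ᵀΣ̂Θ̂₁. Then the bias factor f := ‖Σ̂Θ̂₁ − e₁‖_∞ / Ω̂₁,₁^{1/2} satisfies f ≤ λ/τ̃, where τ̃ = √(τ̃²). -/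
open MeasureTheory ProbabilityTheory Filter Finset Matrix Topology

noncomputable section

/-! The residual `r := X₁ - X₋₁γ̂` is `τ̂²` times `XΘ̂₁`, so `Σ̂Θ̂₁ = Xᵀr / (nτ̂²)` and
`Ω̂₁,₁ = τ̃² / τ̂⁴`. Optimality of `γ̂` along coordinate directions gives `|X_jᵀr| / n ≤ λ` for
`j ≥ 2`, and along `γ̂` itself gives `rᵀX₋₁γ̂ / n = λ‖γ̂‖₁`, whence `X₁ᵀr / n = τ̃² + λ‖γ̂‖₁ = τ̂²`:
the first entry of `Σ̂Θ̂₁ - e₁` vanishes. Hence `‖Σ̂Θ̂₁ - e₁‖_∞ ≤ λ / τ̂²`, and dividing by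
`Ω̂₁,₁^{1/2} = τ̃ / τ̂²` gives `λ / τ̃`. -/

def dropFirstCol {n P : ℕ} (X : Matrix (Fin n) (Fin P) ℝ) : Matrix (Fin n) (Fin (P - 1)) ℝ :=
  fun i j => X i (colIdx j)

lemma nwRes_eq {n P : ℕ} (X : Matrix (Fin n) (Fin P) ℝ) (g : Fin (P - 1) → ℝ) :
    nwRes X g = col0 X - dropFirstCol X *ᵥ g := rfl

lemma sqNorm_eq_dotProduct {m : ℕ} (v : Fin m → ℝ) : sqNorm v = v ⬝ᵥ v := by
  simp [sqNorm, dotProduct, sq]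

lemma l1Norm_nonneg {m : ℕ} (v : Fin m → ℝ) : 0 ≤ l1Norm v :=
  Finset.sum_nonneg fun i _ => abs_nonneg (v i)

lemma l1Norm_add_le {m : ℕ} (u v : Fin m → ℝ) : l1Norm (u + v) ≤ l1Norm u + l1Norm v := by
  rw [l1Norm, l1Norm, l1Norm, ← Finset.sum_add_distrib]
  exact Finset.sum_le_sum fun i _ => abs_add_le (u i) (v i)

lemma l1Norm_smul {m : ℕ} (a : ℝ) (v : Fin m → ℝ) : l1Norm (a • v) = |a| * l1Norm v := by
  simp [l1Norm, abs_mul, Finset.mul_sum]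

lemma l1Norm_single {m : ℕ} (k : Fin m) (a : ℝ) : l1Norm (Pi.single k a) = |a| := by
  rw [l1Norm, Finset.sum_eq_single k (fun j _ hj => by simp [hj]) (by simp)]
  simp

lemma sum_eq_add_sum_colIdx {P : ℕ} (hP : 0 < P) (f : Fin P → ℝ) :
    ∑ k, f k = f ⟨0, hP⟩ + ∑ j : Fin (P - 1), f (colIdx j) := by
  obtain ⟨q, rfl⟩ := Nat.exists_eq_succ_of_ne_zero hP.ne'
  rw [Fin.sum_univ_succ]
  -- `q + 1 - 1` reduces to `q`, and `colIdx j` to `j.succ`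
  rfl

lemma mulVec_thetaHat {n P : ℕ} (X : Matrix (Fin n) (Fin P) ℝ) (lam : ℝ)
    (g : Fin (P - 1) → ℝ) :
    X *ᵥ thetaHat X lam g = (tauHatSq X lam g)⁻¹ • nwRes X g := by
  ext i
  rcases Nat.eq_zero_or_pos P with rfl | hP
  · simp [mulVec, dotProduct, nwRes, col0, fstEntry]
  · have h0 : thetaHat X lam g ⟨0, hP⟩ = 1 / tauHatSq X lam g := by simp [thetaHat]
    have hcol (j : Fin (P - 1)) : thetaHat X lam g (colIdx j) = -g j / tauHatSq X lam g := by
      simp [thetaHat, colIdx]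
    simp only [mulVec, dotProduct, Pi.smul_apply, smul_eq_mul]
    rw [sum_eq_add_sum_colIdx hP]
    simp only [h0, hcol, nwRes, col0, fstEntry, dif_pos hP, mul_sub, Finset.mul_sum]
    ring_nf
    rw [Finset.sum_neg_distrib, sub_eq_add_neg]

lemma sigmaHat_mulVec {n P : ℕ} (X : Matrix (Fin n) (Fin P) ℝ) (v : Fin P → ℝ) :
    sigmaHat X *ᵥ v = (1 / n : ℝ) • (Xᵀ *ᵥ (X *ᵥ v)) := by
  ext j
  simp only [mulVec, dotProduct, sigmaHat, Pi.smul_apply, smul_eq_mul, Finset.mul_sum,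
    Finset.sum_mul]
  rw [Finset.sum_comm]
  simp only [transpose_apply, mul_assoc]

lemma biasVec_eq {n P : ℕ} (X : Matrix (Fin n) (Fin P) ℝ) (lam : ℝ) (g : Fin (P - 1) → ℝ)
    (j : Fin P) :
    biasVec X lam g j =
      (Xᵀ *ᵥ nwRes X g) j / n / tauHatSq X lam g - if j.1 = 0 then 1 else 0 := by
  have h := congr_fun (sigmaHat_mulVec X (thetaHat X lam g)) j
  rw [mulVec_thetaHat, mulVec_smul] at h
  simp only [mulVec, dotProduct, Pi.smul_apply, smul_eq_mul] at h
  simp only [biasVec, h]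
  simp only [mulVec, dotProduct]
  ring

lemma omegaHat_eq {n P : ℕ} (X : Matrix (Fin n) (Fin P) ℝ) (lam : ℝ)
    (g : Fin (P - 1) → ℝ) :
    omegaHat X lam g = tauTildeSq X g / tauHatSq X lam g ^ 2 := by
  have h : omegaHat X lam g = thetaHat X lam g ⬝ᵥ (sigmaHat X *ᵥ thetaHat X lam g) := by
    simp only [omegaHat, dotProduct, mulVec, Finset.mul_sum, mul_assoc]
  rw [h, sigmaHat_mulVec, dotProduct_smul, dotProduct_mulVec, vecMul_transpose,
    mulVec_thetaHat, smul_dotProduct, dotProduct_smul]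
  simp only [tauTildeSq, sqNorm_eq_dotProduct, smul_eq_mul]
  ring

lemma nonneg_of_forall_Ioo_nonneg_add_mul {a b : ℝ}
    (h : ∀ t ∈ Set.Ioo (0 : ℝ) 1, 0 ≤ a + t * b) : 0 ≤ a := by
  have hlim : Tendsto (fun t : ℝ => a + t * b) (𝓝[>] 0) (𝓝 a) := by
    have : Continuous fun t : ℝ => a + t * b := by fun_prop
    simpa using (this.tendsto 0).mono_left nhdsWithin_le_nhds
  exact ge_of_tendsto hlim (Filter.mem_of_superset (Ioo_mem_nhdsGT one_pos) h)

lemma nwRes_add_smul {n P : ℕ} (X : Matrix (Fin n) (Fin P) ℝ) (g d : Fin (P - 1) → ℝ)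
    (t : ℝ) :
    nwRes X (g + t • d) = nwRes X g - t • (dropFirstCol X *ᵥ d) := by
  rw [nwRes_eq, nwRes_eq, mulVec_add, mulVec_smul]
  abel

lemma dotProduct_sub_smul_self {m : ℕ} (r w : Fin m → ℝ) (t : ℝ) :
    (r - t • w) ⬝ᵥ (r - t • w) = r ⬝ᵥ r - 2 * t * (r ⬝ᵥ w) + t ^ 2 * (w ⬝ᵥ w) := by
  simp only [sub_dotProduct, dotProduct_sub, smul_dotProduct, dotProduct_smul, smul_eq_mul,
    dotProduct_comm w r]
  ring

namespace IsNodewiseSol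

variable {n P : ℕ} {X : Matrix (Fin n) (Fin P) ℝ} {lam : ℝ} {g : Fin (P - 1) → ℝ}

/-- First-order optimality of `γ̂` in the direction `d`, where `t * c` bounds the growth of the
penalty along `d`. -/
lemma nwRes_dotProduct_le (hsol : IsNodewiseSol X lam g) (hlam : 0 ≤ lam)
    (d : Fin (P - 1) → ℝ) (c : ℝ)
    (hc : ∀ t ∈ Set.Ioo (0 : ℝ) 1, l1Norm (g + t • d) ≤ l1Norm g + t * c) :
    nwRes X g ⬝ᵥ (dropFirstCol X *ᵥ d) / n ≤ lam * c := by
  set r := nwRes X g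
  set w := dropFirstCol X *ᵥ d
  suffices 0 ≤ 2 * (lam * c - r ⬝ᵥ w / n) by linarith
  refine nonneg_of_forall_Ioo_nonneg_add_mul (b := w ⬝ᵥ w / n) fun t ht => ?_
  have hopt := hsol (g + t • d)
  simp only [nwObj, nwRes_add_smul, sqNorm_eq_dotProduct, dotProduct_sub_smul_self] at hopt
  have hl1 := mul_le_mul_of_nonneg_left (hc t ht) hlam
  refine nonneg_of_mul_nonneg_right ?_ ht.1
  linear_combination hopt + 2 * hl1

lemma nwRes_dotProduct_le_l1Norm (hsol : IsNodewiseSol X lam g) (hlam : 0 ≤ lam)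
    (d : Fin (P - 1) → ℝ) : nwRes X g ⬝ᵥ (dropFirstCol X *ᵥ d) / n ≤ lam * l1Norm d :=
  hsol.nwRes_dotProduct_le hlam d _ fun t ht =>
    calc l1Norm (g + t • d) ≤ l1Norm g + l1Norm (t • d) := l1Norm_add_le _ _
      _ = l1Norm g + t * l1Norm d := by rw [l1Norm_smul, abs_of_pos ht.1]

lemma nwRes_dotProduct_eq_l1Norm (hsol : IsNodewiseSol X lam g) (hlam : 0 ≤ lam) :
    nwRes X g ⬝ᵥ (dropFirstCol X *ᵥ g) / n = lam * l1Norm g := by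
  refine le_antisymm (hsol.nwRes_dotProduct_le_l1Norm hlam g) ?_
  have h := hsol.nwRes_dotProduct_le hlam (-g) (-l1Norm g) fun t ht => by
    rw [show g + t • -g = (1 - t) • g by module, l1Norm_smul, abs_of_pos (sub_pos.2 ht.2)]
    linarith
  rw [mulVec_neg, dotProduct_neg, neg_div] at h
  linarith

lemma abs_mulVec_colIdx_le (hsol : IsNodewiseSol X lam g) (hlam : 0 ≤ lam)
    (k : Fin (P - 1)) :
    |(Xᵀ *ᵥ nwRes X g) (colIdx k)| / n ≤ lam := by
  have key (s : ℝ) (hs : |s| = 1) : s * (Xᵀ *ᵥ nwRes X g) (colIdx k) / n ≤ lam := by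
    have h := hsol.nwRes_dotProduct_le_l1Norm hlam (Pi.single k s)
    rw [l1Norm_single, hs, mul_one] at h
    convert h using 2
    simp only [dotProduct, mulVec, dropFirstCol, Pi.single_apply, mul_ite, mul_zero,
      Finset.sum_ite_eq', Finset.mem_univ, if_true, transpose_apply, Finset.mul_sum]
    exact Finset.sum_congr rfl fun i _ => by ring
  rcases abs_choice ((Xᵀ *ᵥ nwRes X g) (colIdx k)) with h | h
  · simpa [h] using key 1 (by simp)
  · simpa [h] using key (-1) (by simp)

lemma col0_dotProduct_nwRes (hsol : IsNodewiseSol X lam g) (hlam : 0 ≤ lam) :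
    col0 X ⬝ᵥ nwRes X g / n = tauHatSq X lam g := by
  have hcol : col0 X = nwRes X g + dropFirstCol X *ᵥ g := by rw [nwRes_eq]; abel
  rw [hcol, add_dotProduct, dotProduct_comm (dropFirstCol X *ᵥ g), add_div,
    hsol.nwRes_dotProduct_eq_l1Norm hlam]
  simp only [tauHatSq, tauTildeSq, sqNorm_eq_dotProduct]
  ring

lemma abs_biasVec_le (hsol : IsNodewiseSol X lam g) (hlam : 0 ≤ lam)
    (hτ : 0 < tauHatSq X lam g) (j : Fin P) :
    |biasVec X lam g j| ≤ lam / tauHatSq X lam g := by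
  rw [biasVec_eq]
  rcases j with ⟨_ | m, hm⟩
  · have h : (Xᵀ *ᵥ nwRes X g) ⟨0, hm⟩ = col0 X ⬝ᵥ nwRes X g := by
      simp [mulVec, dotProduct, col0, fstEntry, hm]
    simp only [h, hsol.col0_dotProduct_nwRes hlam, div_self hτ.ne', ↓reduceIte, sub_self,
      abs_zero]
    positivity
  · have h := hsol.abs_mulVec_colIdx_le hlam ⟨m, by omega⟩
    simp only [Nat.add_one_ne_zero, if_false, sub_zero, abs_div, abs_of_pos hτ, Nat.abs_cast]
    gcongr
    exact h

end IsNodewiseSol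

theorem statement15_general (n p : ℕ)
    (X : Fin n → Fin p → ℝ) (lam : ℝ) (hlam : 0 < lam)
    (g : Fin (p - 1) → ℝ) (hsol : IsNodewiseSol X lam g)
    (hτ : 0 < tauTildeSq X g) :
    biasFactor X lam g ≤ lam / Real.sqrt (tauTildeSq X g) := by
  have hτhat : 0 < tauHatSq X lam g :=
    add_pos_of_pos_of_nonneg hτ (mul_nonneg hlam.le (l1Norm_nonneg g))
  have hsup : supNorm (biasVec X lam g) ≤ lam / tauHatSq X lam g :=
    Real.iSup_le (hsol.abs_biasVec_le hlam.le hτhat) (by positivity)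
  have hsqrt : √(omegaHat X lam g) = √(tauTildeSq X g) / tauHatSq X lam g := by
    rw [omegaHat_eq X lam g, Real.sqrt_div hτ.le, Real.sqrt_sq hτhat.le]
  rw [biasFactor, hsqrt, div_div_eq_mul_div]
  gcongr
  exact (le_div_iff₀ hτhat).1 hsup

/-- the bias factor satisfies `f ≤ λ/τ̃`. -/
theorem statement15 (n p : ℕ) (hn : 1 ≤ n) (hp : 2 ≤ p)
    (X : Fin n → Fin p → ℝ) (lam : ℝ) (hlam : 0 < lam)
    (g : Fin (p - 1) → ℝ) (hsol : IsNodewiseSol X lam g)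
    (hτ : 0 < tauTildeSq X g) :
    biasFactor X lam g ≤ lam / Real.sqrt (tauTildeSq X g) :=
  statement15_general n p X lam hlam g hsol hτ

end
end
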